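/- arXiv:2308.16843 — 9 statements merged into one kernel-verified Lean document; each statement's English description precedes it below -/
import Mathlib

section
/- Let C ⊣ U ⊣ D be a string of adjunctions between categories A and B (with C, D : B → A and U : A → B), where U is full and faithful. Let γ : Id ⇒ UC be the unit of C ⊣ U and β : UD ⇒ Id the counit of U ⊣ D. Then for every arrow g : X → Y in B, the map sending λ : UCX → UDY with β_Y ∘ λ ∘ γ_X = g to β_Y ∘ λ : UCX → Y is a bijection between Θ_{γ,β}(g) = { λ : UCX → UDY | β_Y ∘ λ ∘ γ_X = g } and Θ_γ(g) = { φ : UCX → Y | φ ∘ γ_X = g }. -/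
open CategoryTheory

/-- Given a string of adjunctions `C ⊣ U ⊣ D` with `U` full and faithful, for every arrow
`g : X ⟶ Y` the map `λ ↦ λ ≫ β_Y` is a bijection from
`Θ_{γ,β}(g) = {λ : UCX ⟶ UDY | γ_X ≫ λ ≫ β_Y = g}` to
`Θ_γ(g) = {φ : UCX ⟶ Y | γ_X ≫ φ = g}`. -/
theorem stmt5 {A B : Type*} [Category A] [Category B]
    (C D : B ⥤ A) (U : A ⥤ B) [U.Full] [U.Faithful]
    (adj₁ : C ⊣ U) (adj₂ : U ⊣ D) (X Y : B) (g : X ⟶ Y) :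
    Function.Bijective
      (fun l : {l : U.obj (C.obj X) ⟶ U.obj (D.obj Y) //
          adj₁.unit.app X ≫ l ≫ adj₂.counit.app Y = g} =>
        (⟨l.1 ≫ adj₂.counit.app Y, l.2⟩ :
          {φ : U.obj (C.obj X) ⟶ Y // adj₁.unit.app X ≫ φ = g})) := by
  have key : ∀ φ : U.obj (C.obj X) ⟶ Y,
      U.map (adj₂.unit.app (C.obj X) ≫ D.map φ) ≫ adj₂.counit.app Y = φ := by
    intro φ
    have h1 := adj₂.counit.naturality φ
    simp only [Functor.comp_map, Functor.id_map] at h1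
    rw [U.map_comp, Category.assoc, h1, ← Category.assoc]
    simp
  constructor
  · rintro ⟨l₁, h₁⟩ ⟨l₂, h₂⟩ h
    simp only [Subtype.mk.injEq] at h ⊢
    obtain ⟨m₁, rfl⟩ := U.map_surjective l₁
    obtain ⟨m₂, rfl⟩ := U.map_surjective l₂
    have h' : (adj₂.homEquiv (C.obj X) Y).symm m₁ =
        (adj₂.homEquiv (C.obj X) Y).symm m₂ := by
      simpa [Adjunction.homEquiv_counit] using h
    exact congrArg U.map ((adj₂.homEquiv _ _).symm.injective h')
  · rintro ⟨φ, hφ⟩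
    refine ⟨⟨U.map (adj₂.unit.app (C.obj X) ≫ D.map φ), ?_⟩, ?_⟩
    · rw [key φ, hφ]
    · exact Subtype.ext (key φ)
end

section
/- Let (B, Θ) be a category with a structure of nullhomotopies, and let (N(g), n_g, ν_g) be a homotopy kernel of g : X → Y with respect to Θ. If Θ(g) is nonempty, then n_g : N(g) → X is a split epimorphism. If moreover Θ(h) is a singleton for every arrow h : N(g) → Y, then n_g is an isomorphism. -/
open CategoryTheory

universe w v u

/-- A structure of nullhomotopies on a category `B`: a set of nullhomotopies on each arrow,
together with associative and unital pre- and post-composition actions. -/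
structure NullStruct (B : Type u) [Category.{v} B] where
  null : ∀ {X Y : B}, (X ⟶ Y) → Type w
  pre : ∀ {W X Y : B} (f : W ⟶ X) {g : X ⟶ Y}, null g → null (f ≫ g)
  post : ∀ {X Y Z : B} {g : X ⟶ Y} (h : Y ⟶ Z), null g → null (g ≫ h)
  pre_pre : ∀ {V W X Y : B} (f' : V ⟶ W) (f : W ⟶ X) {g : X ⟶ Y} (φ : null g),
    HEq (pre (f' ≫ f) φ) (pre f' (pre f φ))
  post_post : ∀ {X Y Z Z' : B} {g : X ⟶ Y} (h : Y ⟶ Z) (h' : Z ⟶ Z') (φ : null g),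
    HEq (post (h ≫ h') φ) (post h' (post h φ))
  pre_post : ∀ {W X Y Z : B} (f : W ⟶ X) {g : X ⟶ Y} (h : Y ⟶ Z) (φ : null g),
    HEq (pre f (post h φ)) (post h (pre f φ))
  pre_id : ∀ {X Y : B} {g : X ⟶ Y} (φ : null g), HEq (pre (𝟙 X) φ) φ
  post_id : ∀ {X Y : B} {g : X ⟶ Y} (φ : null g), HEq (post (𝟙 Y) φ) φ

variable {B : Type u} [Category.{v} B]

/-- `(N, n, ν)` is a homotopy kernel of `g` with respect to `Θ`. -/
def IsHKernel (Θ : NullStruct.{w} B) {N X Y : B} (g : X ⟶ Y) (n : N ⟶ X)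
    (ν : Θ.null (n ≫ g)) : Prop :=
  ∀ {W : B} (f : W ⟶ X) (φ : Θ.null (f ≫ g)),
    ∃! f' : W ⟶ N, f' ≫ n = f ∧ HEq (Θ.pre f' ν) φ

/-- `(Q, q, θ)` is a homotopy cokernel of `g` with respect to `Θ`. -/
def IsHCokernel (Θ : NullStruct.{w} B) {X Y Q : B} (g : X ⟶ Y) (q : Y ⟶ Q)
    (θ : Θ.null (g ≫ q)) : Prop :=
  ∀ {W : B} (h : Y ⟶ W) (ψ : Θ.null (g ≫ h)),
    ∃! h' : Q ⟶ W, q ≫ h' = h ∧ HEq (Θ.post h' θ) ψ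

/-- `T` is `Θ`-orthogonal to `F`: each `Θ(h)` is a singleton for `h : T ⟶ F`. -/
def NullOrth (Θ : NullStruct.{w} B) (T F : B) : Prop :=
  ∀ h : T ⟶ F, Nonempty (Θ.null h) ∧ Subsingleton (Θ.null h)

/-- A homotopy torsion theory with respect to a structure of nullhomotopies `Θ`. -/
structure HTorsionTheory (Θ : NullStruct.{w} B) where
  T : Set B
  F : Set B
  repleteT : ∀ {X Y : B}, (X ≅ Y) → X ∈ T → Y ∈ T
  repleteF : ∀ {X Y : B}, (X ≅ Y) → X ∈ F → Y ∈ F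
  pres : ∀ X : B, ∃ (TX FX : B) (t : TX ⟶ X) (f : X ⟶ FX) (ξ : Θ.null (t ≫ f)),
    TX ∈ T ∧ FX ∈ F ∧ IsHKernel Θ f t ξ ∧ IsHCokernel Θ t f ξ
  orth : ∀ {t f : B}, t ∈ T → f ∈ F → NullOrth Θ t f

namespace IsHKernel

variable {Θ : NullStruct.{w} B} {N X Y : B} {g : X ⟶ Y} {n : N ⟶ X} {ν : Θ.null (n ≫ g)}

theorem exists_lift (hker : IsHKernel Θ g n ν) {W : B} (f : W ⟶ X)
    (hf : Nonempty (Θ.null (f ≫ g))) : ∃ f' : W ⟶ N, f' ≫ n = f := by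
  obtain ⟨φ⟩ := hf
  obtain ⟨f', ⟨hf', -⟩, -⟩ := hker f φ
  exact ⟨f', hf'⟩

theorem exists_section (hker : IsHKernel Θ g n ν) (hg : Nonempty (Θ.null g)) :
    ∃ s : X ⟶ N, s ≫ n = 𝟙 X :=
  hker.exists_lift (𝟙 X) (by rwa [Category.id_comp])

/-- Both `a` and `b` factor `a ≫ n` through the kernel, and the nullhomotopies `ν ∘ a`, `ν ∘ b`
agree because `Θ(a ≫ n ≫ g)` has at most one element. -/
theorem hom_ext (hker : IsHKernel Θ g n ν) {W : B} {a b : W ⟶ N} (hab : a ≫ n = b ≫ n)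
    [Subsingleton (Θ.null ((a ≫ n) ≫ g))] : a = b := by
  let φ : Θ.null ((a ≫ n) ≫ g) := cast (by rw [Category.assoc]) (Θ.pre a ν)
  obtain ⟨_, -, huniq⟩ := hker (a ≫ n) φ
  have ha := huniq a ⟨rfl, (Subsingleton.helim (by rw [Category.assoc]) φ _).symm⟩
  have hb := huniq b ⟨hab.symm, (Subsingleton.helim (by rw [hab, Category.assoc]) φ _).symm⟩
  exact ha.trans hb.symm

end IsHKernel

/-- If `Θ(g)` is nonempty then the homotopy kernel projection `n_g` is a split epimorphism;
if moreover `Θ(h)` is a singleton for every `h : N(g) ⟶ Y`, then `n_g` is an isomorphism. -/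
theorem stmt7 (Θ : NullStruct.{w} B) {N X Y : B} (g : X ⟶ Y) (n : N ⟶ X)
    (ν : Θ.null (n ≫ g)) (hker : IsHKernel Θ g n ν) :
    (Nonempty (Θ.null g) → IsSplitEpi n) ∧
    (Nonempty (Θ.null g) →
      (∀ h : N ⟶ Y, Nonempty (Θ.null h) ∧ Subsingleton (Θ.null h)) → IsIso n) := by
  refine ⟨fun hg => ?_, fun hg hsing => ?_⟩
  · obtain ⟨s, hs⟩ := hker.exists_section hg
    exact ⟨⟨⟨s, hs⟩⟩⟩
  · obtain ⟨s, hs⟩ := hker.exists_section hg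
    have : Subsingleton (Θ.null (((n ≫ s) ≫ n) ≫ g)) := (hsing _).2
    have hsn : n ≫ s = 𝟙 N :=
      hker.hom_ext (by rw [Category.assoc, hs, Category.comp_id, Category.id_comp])
    exact ⟨s, hsn, hs⟩
end

section
/- Let (B, Θ) be a category with nullhomotopies and (N(g), n_g, ν_g) a strong homotopy kernel of g : X → Y. If g is an isomorphism, then the object N(g) is Θ-trivial, i.e. Θ(id_{N(g)}) is nonempty. -/
open CategoryTheory

universe w v u

variable {B : Type u} [Category.{v} B]

/-- `(N, n, ν)` is a strong homotopy kernel of `g` with respect to `Θ`. -/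
def IsStrongHKernel (Θ : NullStruct.{w} B) {N X Y : B} (g : X ⟶ Y) (n : N ⟶ X)
    (ν : Θ.null (n ≫ g)) : Prop :=
  IsHKernel Θ g n ν ∧
    ∀ {W : B} (f : W ⟶ N) (φ : Θ.null (f ≫ n)),
      HEq (Θ.post g φ) (Θ.pre f ν) → ∃! φ' : Θ.null f, Θ.post n φ' = φ

/-! Transporting `ν` along `inv g` gives a nullhomotopy `φ` of `n` with `post g φ ≍ ν`, because
`inv g ≫ g = 𝟙`; the strong kernel property at `f = 𝟙 N` then lifts `φ` to a nullhomotopy of `𝟙 N`. -/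

namespace NullStruct

variable (Θ : NullStruct.{w} B)

lemma post_heq_of_eq {X Y Z : B} {f f' : X ⟶ Y} (h : f = f') (g : Y ⟶ Z) {χ : Θ.null f}
    {χ' : Θ.null f'} (hχ : HEq χ χ') : HEq (Θ.post g χ) (Θ.post g χ') := by
  subst h; cases hχ; rfl

lemma post_post_heq_of_comp_eq_id {X Y Z : B} {k : X ⟶ Y} {s : Y ⟶ Z} {g : Z ⟶ Y}
    (hsg : s ≫ g = 𝟙 Y) (ν : Θ.null k) : HEq (Θ.post g (Θ.post s ν)) ν := by
  refine (Θ.post_post s g ν).symm.trans ?_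
  rw [hsg]
  exact Θ.post_id ν

end NullStruct

lemma IsStrongHKernel.nonempty_null_id {Θ : NullStruct.{w} B} {N X Y : B} {g : X ⟶ Y}
    {n : N ⟶ X} {ν : Θ.null (n ≫ g)} (hker : IsStrongHKernel Θ g n ν) {φ : Θ.null n}
    (hφ : HEq (Θ.post g φ) ν) : Nonempty (Θ.null (𝟙 N)) := by
  have hn : n = 𝟙 N ≫ n := (Category.id_comp n).symm
  obtain ⟨φ', -⟩ := hker.2 (𝟙 N) (cast (congrArg Θ.null hn) φ) <|
    (Θ.post_heq_of_eq hn.symm g (cast_heq _ _)).trans (hφ.trans (Θ.pre_id ν).symm)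
  exact ⟨φ'⟩

/-- If `(N, n, ν)` is a strong homotopy kernel of an isomorphism `g`, then `N` is `Θ`-trivial. -/
theorem stmt8 (Θ : NullStruct.{w} B) {N X Y : B} (g : X ⟶ Y) (n : N ⟶ X)
    (ν : Θ.null (n ≫ g)) (hker : IsStrongHKernel Θ g n ν) [IsIso g] :
    Nonempty (Θ.null (𝟙 N)) := by
  have hn : (n ≫ g) ≫ inv g = n := by simp
  exact hker.nonempty_null_id (φ := cast (congrArg Θ.null hn) (Θ.post (inv g) ν)) <|
    (Θ.post_heq_of_eq hn.symm g (cast_heq _ _)).trans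
      (Θ.post_post_heq_of_comp_eq_id (IsIso.inv_hom_id g) ν)
end

section
/- Let (B, Θ) be a category with a discrete structure of nullhomotopies such that Z₁(Θ) is a closed ideal. If Θ-kernels exist in B for all arrows, then they are strong: for any composable W →f N(h) →n_h X →h Y with n_h a Θ-kernel of h, if n_h ∘ f ∈ Z₁(Θ) then f ∈ Z₁(Θ). -/
/-!
Closedness writes the null arrow `f ≫ n` as `a ≫ b` with `b` leaving an object `M` whose identity
is null. Then `b` is null, hence lifts through the Θ-kernel `n` to some `b'`; since lifts of null
arrows through `n` are unique, `f = a ≫ b'`, which is null because it factors through `M`.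
-/

open CategoryTheory

section NullIdeal

variable {B : Type*} [Category B] (Z₁ : ∀ ⦃X Y : B⦄, (X ⟶ Y) → Prop)

theorem comp_mem_of_mem_left
    (ideal : ∀ {W X Y Z : B} (f : W ⟶ X) (g : X ⟶ Y) (h : Y ⟶ Z), Z₁ g → Z₁ (f ≫ g ≫ h))
    {X Y Z : B} (g : X ⟶ Y) (h : Y ⟶ Z) (hg : Z₁ g) : Z₁ (g ≫ h) := by
  simpa using ideal (𝟙 X) g h hg

theorem comp_mem_of_id_mem
    (ideal : ∀ {W X Y Z : B} (f : W ⟶ X) (g : X ⟶ Y) (h : Y ⟶ Z), Z₁ g → Z₁ (f ≫ g ≫ h))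
    {X M Y : B} (a : X ⟶ M) (b : M ⟶ Y) (hM : Z₁ (𝟙 M)) : Z₁ (a ≫ b) := by
  simpa using ideal a (𝟙 M) b hM

theorem mem_of_comp_mem_of_existsUnique_lift
    (ideal : ∀ {W X Y Z : B} (f : W ⟶ X) (g : X ⟶ Y) (h : Y ⟶ Z), Z₁ g → Z₁ (f ≫ g ≫ h))
    (closed : ∀ {X Y : B} (g : X ⟶ Y), Z₁ g →
      ∃ (N : B), Z₁ (𝟙 N) ∧ ∃ (a : X ⟶ N) (b : N ⟶ Y), a ≫ b = g)
    {N X : B} (n : N ⟶ X) (hlift : ∀ {W : B} (g : W ⟶ X), Z₁ g → ∃! g' : W ⟶ N, g' ≫ n = g)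
    {W : B} (f : W ⟶ N) (hf : Z₁ (f ≫ n)) : Z₁ f := by
  obtain ⟨M, hM, a, b, hab⟩ := closed (f ≫ n) hf
  obtain ⟨b', hb', -⟩ := hlift b (by simpa using comp_mem_of_id_mem Z₁ ideal (𝟙 M) b hM)
  have hfactor : f = a ≫ b' :=
    (hlift (f ≫ n) hf).unique rfl (by rw [Category.assoc, hb', hab])
  exact hfactor ▸ comp_mem_of_id_mem Z₁ ideal a b' hM

end NullIdeal

theorem stmt10_general {B : Type*} [Category B] (Z₁ : ∀ ⦃X Y : B⦄, (X ⟶ Y) → Prop)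
    (ideal : ∀ {W X Y Z : B} (f : W ⟶ X) (g : X ⟶ Y) (h : Y ⟶ Z), Z₁ g → Z₁ (f ≫ g ≫ h))
    (closed : ∀ {X Y : B} (g : X ⟶ Y), Z₁ g →
      ∃ (N : B), Z₁ (𝟙 N) ∧ ∃ (a : X ⟶ N) (b : N ⟶ Y), a ≫ b = g)
    {W N X Y : B} (h : X ⟶ Y) (n : N ⟶ X)
    (huniv : ∀ {W' : B} (f : W' ⟶ X), Z₁ (f ≫ h) → ∃! f' : W' ⟶ N, f' ≫ n = f)
    (f : W ⟶ N) (hf : Z₁ (f ≫ n)) : Z₁ f :=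
  mem_of_comp_mem_of_existsUnique_lift Z₁ ideal closed n
    (fun g hg => huniv g (comp_mem_of_mem_left Z₁ ideal g h hg)) f hf

/-- For a discrete structure of nullhomotopies whose ideal `Z₁(Θ)` is closed, if Θ-kernels exist
for all arrows then they are strong: for `f : W ⟶ N(h)` with `n_h ∘ f ∈ Z₁`, also `f ∈ Z₁`. -/
theorem stmt10 {B : Type*} [Category B] (Z₁ : ∀ ⦃X Y : B⦄, (X ⟶ Y) → Prop)
    (ideal : ∀ {W X Y Z : B} (f : W ⟶ X) (g : X ⟶ Y) (h : Y ⟶ Z), Z₁ g → Z₁ (f ≫ g ≫ h))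
    (closed : ∀ {X Y : B} (g : X ⟶ Y), Z₁ g →
      ∃ (N : B), Z₁ (𝟙 N) ∧ ∃ (a : X ⟶ N) (b : N ⟶ Y), a ≫ b = g)
    (kernels : ∀ {X Y : B} (h : X ⟶ Y), ∃ (N : B) (n : N ⟶ X), Z₁ (n ≫ h) ∧
      ∀ {W : B} (f : W ⟶ X), Z₁ (f ≫ h) → ∃! f' : W ⟶ N, f' ≫ n = f)
    {W N X Y : B} (h : X ⟶ Y) (n : N ⟶ X)
    (hmem : Z₁ (n ≫ h))
    (huniv : ∀ {W' : B} (f : W' ⟶ X), Z₁ (f ≫ h) → ∃! f' : W' ⟶ N, f' ≫ n = f)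
    (f : W ⟶ N) (hf : Z₁ (f ≫ n)) : Z₁ f :=
  stmt10_general Z₁ ideal closed h n huniv f hf
end

section
/- Let γ : Id ⇒ S be the unit of a monad S on a category B with multiplication μ. Then the ideal Z₁(Θ_γ) = { g : X → Y | ∃ φ : SX → Y with φ ∘ γ_X = g } is closed; indeed it coincides with the class of arrows factoring through an object of the form SB for some object B. -/
open CategoryTheory

namespace CategoryTheory.Monad

variable {B : Type*} [Category B] (S : Monad B)

/-- `S.map a ≫ μ_Z` is the Kleisli extension of `a`. -/
lemma η_app_comp_map_comp_μ_app {X Z : B} (a : X ⟶ S.obj Z) :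
    S.η.app X ≫ S.map a ≫ S.μ.app Z = a := by
  rw [← S.η.naturality_assoc a, Functor.id_map, S.left_unit, Category.comp_id]

lemma exists_η_app_comp_eq_iff_factors_through_free {X Y : B} (g : X ⟶ Y) :
    (∃ φ : S.obj X ⟶ Y, S.η.app X ≫ φ = g) ↔
      ∃ (Z : B) (a : X ⟶ S.obj Z) (b : S.obj Z ⟶ Y), a ≫ b = g :=
  ⟨fun ⟨φ, hφ⟩ => ⟨X, S.η.app X, φ, hφ⟩,
   fun ⟨Z, a, b, hab⟩ => ⟨S.map a ≫ S.μ.app Z ≫ b, by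
     simpa only [Category.assoc] using (S.η_app_comp_map_comp_μ_app a =≫ b).trans hab⟩⟩

end CategoryTheory.Monad

/-- For a monad `S` with unit `γ = S.η`, the ideal
`Z₁(Θ_γ) = {g : X ⟶ Y | ∃ φ : SX ⟶ Y, γ_X ≫ φ = g}` is closed, and it coincides with the class
of arrows factoring through an object of the form `S B'`. -/
theorem stmt11 {B : Type*} [Category B] (S : Monad B) :
    (∀ {X Y : B} (g : X ⟶ Y), (∃ φ : S.obj X ⟶ Y, S.η.app X ≫ φ = g) →
      ∃ (N : B), (∃ ψ : S.obj N ⟶ N, S.η.app N ≫ ψ = 𝟙 N) ∧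
        ∃ (a : X ⟶ N) (b : N ⟶ Y), a ≫ b = g) ∧
    (∀ {X Y : B} (g : X ⟶ Y),
      (∃ φ : S.obj X ⟶ Y, S.η.app X ≫ φ = g) ↔
      ∃ (Z : B) (a : X ⟶ S.obj Z) (b : S.obj Z ⟶ Y), a ≫ b = g) := by
  refine ⟨fun g hg => ?_, S.exists_η_app_comp_eq_iff_factors_through_free⟩
  obtain ⟨Z, a, b, hab⟩ := (S.exists_η_app_comp_eq_iff_factors_through_free g).1 hg
  -- the free object `S Z` is `Θ_γ`-trivial: `μ_Z` splits `η_{S Z}`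
  exact ⟨S.obj Z, ⟨S.μ.app Z, S.left_unit Z⟩, a, b, hab⟩
end

section
/- Let C ⊣ U be an adjunction with U : A → B full and faithful, unit γ : Id ⇒ UC, and let Θ_γ(g) = { φ : UCX → Y | φ ∘ γ_X = g }. If (Q(g), q_g : Y → Q(g), θ_g ∈ Θ_γ(q_g ∘ g)) is a Θ_γ-cokernel of g : X → Y, then C(q_g) : CY → C Q(g) is an isomorphism. -/
open CategoryTheory

/- A morphism `q` is `P`-local when precomposition with `q` is a bijection on maps into objects
satisfying `P`. The unit `γ_X` is local for the essential image of `U`, so maps out of `U(L X)`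
into such objects are determined by their restriction along `γ_X`; the two halves of the
cokernel property then say exactly that `q` is local as well, and for a reflection the local
morphisms are those inverted by `L`. -/

namespace CategoryTheory.ObjectProperty

variable {B : Type*} [Category B] {P : ObjectProperty B}

lemma isLocal_of_nullhomotopyCokernel {X N Y Q : B} {u : X ⟶ N} (hu : P.isLocal u)
    (g : X ⟶ Y) (q : Y ⟶ Q) (θ : N ⟶ Q) (hθ : u ≫ θ = g ≫ q)
    (coker : ∀ {W : B}, P W → ∀ (h : Y ⟶ W) (ψ : N ⟶ W),
      u ≫ ψ = g ≫ h → ∃! h' : Q ⟶ W, q ≫ h' = h ∧ θ ≫ h' = ψ) :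
    P.isLocal q := by
  intro W hW
  constructor
  · intro h₁ h₂ (hq : q ≫ h₁ = q ≫ h₂)
    have hθh : θ ≫ h₁ = θ ≫ h₂ := (hu W hW).1 (by simp only [reassoc_of% hθ, hq])
    obtain ⟨_, -, hunique⟩ := coker hW (q ≫ h₂) (θ ≫ h₂) (by simp only [reassoc_of% hθ])
    exact (hunique h₁ ⟨hq, hθh⟩).trans (hunique h₂ ⟨rfl, rfl⟩).symm
  · intro h
    obtain ⟨ψ, hψ⟩ := (hu W hW).2 (g ≫ h)
    obtain ⟨h', ⟨hq, -⟩, -⟩ := coker hW h ψ hψ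
    exact ⟨h', hq⟩

end CategoryTheory.ObjectProperty

/-- Let `L ⊣ U` with `U` full and faithful, `γ` the unit, and `Θ_γ` the induced structure of
nullhomotopies. If `(Q, q, θ)` is a `Θ_γ`-cokernel of `g : X ⟶ Y`, then `L(q)` is an
isomorphism. -/
theorem stmt13 {A B : Type*} [Category A] [Category B]
    (L : B ⥤ A) (U : A ⥤ B) [U.Full] [U.Faithful] (adj : L ⊣ U)
    {X Y Q : B} (g : X ⟶ Y) (q : Y ⟶ Q) (θ : U.obj (L.obj X) ⟶ Q)
    (hθ : adj.unit.app X ≫ θ = g ≫ q)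
    (coker : ∀ {W : B} (h : Y ⟶ W) (ψ : U.obj (L.obj X) ⟶ W),
      adj.unit.app X ≫ ψ = g ≫ h → ∃! h' : Q ⟶ W, q ≫ h' = h ∧ θ ≫ h' = ψ) :
    IsIso (L.map q) := by
  rw [← ObjectProperty.isLocal_iff_isIso_map adj]
  exact ObjectProperty.isLocal_of_nullhomotopyCokernel
    (ObjectProperty.isLocal_adj_unit_app adj X) g q θ hθ fun _ ↦ coker
end

section
/- Let β : R ⇒ Id be the counit of an idempotent comonad R on a category B, with comultiplication σ. Then for every object X, the triple (RX, β_X : RX → X, id_{RX}) is a strong homotopy kernel of id_X with respect to the structure of nullhomotopies Θ_β(g : X → Y) = { ψ : X → RY | β_Y ∘ ψ = g }. -/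
open CategoryTheory

namespace CategoryTheory.Comonad

variable {B : Type*} [Category B] (R : Comonad B)

theorem isIso_ε_app_obj {X : B} [IsIso (R.δ.app X)] : IsIso (R.ε.app (R.obj X)) :=
  IsIso.of_isIso_fac_left (R.left_counit X)

/-- `ε_{RX}` is inverse to `δ_X`, so the lift is forced to be `f ≫ δ_X`. -/
theorem existsUnique_lift_comp_ε_app_obj {X W : B} [IsIso (R.δ.app X)] (f : W ⟶ R.obj X) :
    ∃! φ : W ⟶ R.obj (R.obj X), φ ≫ R.ε.app (R.obj X) = f ∧ φ ≫ R.map (R.ε.app X) = f := by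
  have := R.isIso_ε_app_obj (X := X)
  refine ⟨f ≫ R.δ.app X, ⟨by simp, by simp⟩, ?_⟩
  rintro φ ⟨hφ, -⟩
  rw [← cancel_mono (R.ε.app (R.obj X)), hφ]
  simp

end CategoryTheory.Comonad

/-- Let `β = R.ε` be the counit of an idempotent comonad `R`. For every object `X`, the triple
`(R X, β_X, 𝟙 (R X))` is a strong homotopy kernel of `𝟙 X` with respect to the structure of
nullhomotopies `Θ_β(g : X ⟶ Y) = {ψ : X ⟶ R Y | ψ ≫ β_Y = g}` (with action
`h ∘ ψ ∘ f = f ≫ ψ ≫ R h`), stated here concretely. -/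
theorem stmt14 {B : Type*} [Category B] (R : Comonad B)
    (idem : ∀ X : B, IsIso (R.δ.app X)) (X : B) :
    -- `𝟙 (R X)` is a nullhomotopy on `𝟙 X ∘ β_X`
    (𝟙 (R.obj X) ≫ R.ε.app X = R.ε.app X ≫ 𝟙 X) ∧
    -- homotopy kernel universal property
    (∀ {W : B} (f : W ⟶ X) (φ : W ⟶ R.obj X), φ ≫ R.ε.app X = f ≫ 𝟙 X →
      ∃! f' : W ⟶ R.obj X, f' ≫ R.ε.app X = f ∧ f' ≫ 𝟙 (R.obj X) = φ) ∧
    -- strongness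
    (∀ {W : B} (f : W ⟶ R.obj X) (φ : W ⟶ R.obj X),
      φ ≫ R.ε.app X = f ≫ R.ε.app X →
      φ ≫ R.map (𝟙 X) = f ≫ 𝟙 (R.obj X) →
      ∃! φ' : W ⟶ R.obj (R.obj X),
        φ' ≫ R.ε.app (R.obj X) = f ∧ φ' ≫ R.map (R.ε.app X) = φ) := by
  refine ⟨by simp, ?kernel, ?strong⟩
  case kernel =>
    intro W f φ hφ
    refine ⟨φ, ⟨by simpa using hφ, Category.comp_id φ⟩, ?_⟩
    rintro f' ⟨-, hf'⟩
    simpa using hf'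
  case strong =>
    intro W f φ _ hφf
    obtain rfl : φ = f := by simpa using hφf
    have := idem X
    exact R.existsUnique_lift_comp_ε_app_obj φ
end

section
/- Let A be a category and Arr(A) its arrow category, equipped with the structure of nullhomotopies H(A), where a nullhomotopy on a morphism (g, g₀) : (X, x, X₀) → (Y, y, Y₀) is an arrow λ : X₀ → Y with λ ∘ x = g and y ∘ λ = g₀. Given composable arrows g : X → Y and h : Y → Z in A, the morphism (id_X, h) : (X, g, Y) → (X, h·g, Z) together with the nullhomotopy id_Y : Y → Y is a homotopy kernel of (g, id_Z) : (X, h·g, Z) → (Y, h, Z) with respect to H(A). -/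
open CategoryTheory

/-- In `Arr(A)` with the structure of nullhomotopies `H(A)` (a nullhomotopy on `(g, g₀)` is a
diagonal `λ` with `x ≫ λ = g` and `λ ≫ y = g₀`), for composable `g : X ⟶ Y`, `h : Y ⟶ Z`, the
morphism `(𝟙 X, h) : (X, g, Y) ⟶ (X, h·g, Z)` together with the nullhomotopy `𝟙 Y` is a
homotopy kernel of `(g, 𝟙 Z) : (X, h·g, Z) ⟶ (Y, h, Z)`. -/
theorem stmt15 {A : Type*} [Category A] {X Y Z : A} (g : X ⟶ Y) (h : Y ⟶ Z) :
    -- `𝟙 Y` is a nullhomotopy on `(g, 𝟙 Z) ∘ (𝟙 X, h) = (𝟙 X ≫ g, h ≫ 𝟙 Z)`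
    ((Arrow.mk g).hom ≫ 𝟙 Y = 𝟙 X ≫ g) ∧ (𝟙 Y ≫ h = h ≫ 𝟙 Z) ∧
    -- universal property of the homotopy kernel
    (∀ (w : Arrow A) (f : w ⟶ Arrow.mk (g ≫ h)) (φ : w.right ⟶ Y),
      w.hom ≫ φ = f.left ≫ g → φ ≫ h = f.right ≫ 𝟙 Z →
      ∃! f' : w ⟶ Arrow.mk g,
        f' ≫ (Arrow.homMk (u := 𝟙 X) (v := h) (by simp) : Arrow.mk g ⟶ Arrow.mk (g ≫ h)) = f ∧ f'.right ≫ 𝟙 Y = φ) := by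
  refine ⟨by simp, by simp, fun w f φ h1 h2 => ?_⟩
  refine ⟨Arrow.homMk (u := f.left) (v := φ) (by simpa using h1.symm), ⟨?_, by simp⟩, ?_⟩
  · ext
    · simp
    · simpa using h2
  · intro f' ⟨hf1, hf2⟩
    ext
    · have := congrArg CommaMorphism.left hf1
      simpa using this
    · simpa using hf2
end

section
/- Let (B, Θ) be a category with nullhomotopies and (T, F) a Θ-torsion theory. Then T and F are closed under retracts: if F ∈ F and X is a retract of F, then X ∈ F, and dually for T. -/
open CategoryTheory

universe w v u

variable {B : Type u} [Category.{v} B]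

/-!
An object `X` lies in `F` as soon as every map from a torsion object to `X` is nullhomotopic:
the nullhomotopy of `t_X` induces a map `r : F(X) ⟶ X` with `f_X ≫ r = 𝟙`, and since
`Θ(t_X ≫ f_X)` is a singleton, the universal property forces `r ≫ f_X = 𝟙` as well. If `X` is a
retract of `F ∈ F` via `a`, `b`, any `t : T ⟶ X` with `T ∈ T` equals `(t ≫ a) ≫ b`, where
`t ≫ a` is nullhomotopic by orthogonality. The case of `T` is dual.
-/

namespace NullStruct

variable {Θ : NullStruct.{w} B}

lemma heq_of_subsingleton {X Y : B} {g₁ g₂ : X ⟶ Y} (hg : g₁ = g₂)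
    [Subsingleton (Θ.null g₂)] (φ₁ : Θ.null g₁) (φ₂ : Θ.null g₂) : HEq φ₁ φ₂ := by
  subst hg
  exact heq_of_eq (Subsingleton.elim _ _)

lemma nonempty_null_of_comp_retraction {W X Y : B} {g : W ⟶ X} {a : X ⟶ Y} {b : Y ⟶ X}
    (hab : a ≫ b = 𝟙 X) (h : Nonempty (Θ.null (g ≫ a))) : Nonempty (Θ.null g) := by
  obtain ⟨φ⟩ := h
  have hg : (g ≫ a) ≫ b = g := by rw [Category.assoc, hab, Category.comp_id]
  exact ⟨hg ▸ Θ.post b φ⟩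

lemma nonempty_null_of_section_comp {X Y Z : B} {g : X ⟶ Z} {a : X ⟶ Y} {b : Y ⟶ X}
    (hab : a ≫ b = 𝟙 X) (h : Nonempty (Θ.null (b ≫ g))) : Nonempty (Θ.null g) := by
  obtain ⟨φ⟩ := h
  have hg : a ≫ b ≫ g = g := by rw [← Category.assoc, hab, Category.id_comp]
  exact ⟨hg ▸ Θ.pre a φ⟩

end NullStruct

section

variable {Θ : NullStruct.{w} B}

lemma IsHCokernel.eq_id_of_comp_eq {X Y Q : B} {g : X ⟶ Y} {q : Y ⟶ Q}
    {θ : Θ.null (g ≫ q)} (hq : IsHCokernel Θ g q θ) [Subsingleton (Θ.null (g ≫ q))]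
    {e : Q ⟶ Q} (he : q ≫ e = q) : e = 𝟙 Q := by
  obtain ⟨_, _, huniq⟩ := hq q θ
  have hid := huniq (𝟙 Q) ⟨Category.comp_id q, Θ.post_id θ⟩
  have he' := huniq e ⟨he,
    NullStruct.heq_of_subsingleton (by rw [Category.assoc, he]) _ θ⟩
  exact he'.trans hid.symm

lemma IsHKernel.eq_id_of_comp_eq {N X Y : B} {g : X ⟶ Y} {n : N ⟶ X}
    {ν : Θ.null (n ≫ g)} (hn : IsHKernel Θ g n ν) [Subsingleton (Θ.null (n ≫ g))]
    {e : N ⟶ N} (he : e ≫ n = n) : e = 𝟙 N := by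
  obtain ⟨_, _, huniq⟩ := hn n ν
  have hid := huniq (𝟙 N) ⟨Category.id_comp n, Θ.pre_id ν⟩
  have he' := huniq e ⟨he,
    NullStruct.heq_of_subsingleton (by rw [← Category.assoc, he]) _ ν⟩
  exact he'.trans hid.symm

lemma IsHCokernel.isIso_of_nonempty_null {X Y Q : B} {g : X ⟶ Y} {q : Y ⟶ Q}
    {θ : Θ.null (g ≫ q)} (hq : IsHCokernel Θ g q θ) [Subsingleton (Θ.null (g ≫ q))]
    (hg : Nonempty (Θ.null g)) : IsIso q := by
  obtain ⟨φ⟩ := hg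
  obtain ⟨r, ⟨hqr, -⟩, -⟩ := hq (𝟙 Y) (Θ.post (𝟙 Y) φ)
  have hrq : r ≫ q = 𝟙 Q :=
    hq.eq_id_of_comp_eq (by rw [← Category.assoc, hqr, Category.id_comp])
  exact ⟨r, hqr, hrq⟩

lemma IsHKernel.isIso_of_nonempty_null {N X Y : B} {g : X ⟶ Y} {n : N ⟶ X}
    {ν : Θ.null (n ≫ g)} (hn : IsHKernel Θ g n ν) [Subsingleton (Θ.null (n ≫ g))]
    (hg : Nonempty (Θ.null g)) : IsIso n := by
  obtain ⟨φ⟩ := hg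
  obtain ⟨r, ⟨hrn, -⟩, -⟩ := hn (𝟙 X) (Θ.pre (𝟙 X) φ)
  have hnr : n ≫ r = 𝟙 N :=
    hn.eq_id_of_comp_eq (by rw [Category.assoc, hrn, Category.comp_id])
  exact ⟨r, hnr, hrn⟩

end

namespace HTorsionTheory

variable {Θ : NullStruct.{w} B} (tt : HTorsionTheory Θ)

lemma mem_F_of_forall_nonempty_null {X : B}
    (h : ∀ (T' : B) (t : T' ⟶ X), T' ∈ tt.T → Nonempty (Θ.null t)) : X ∈ tt.F := by
  obtain ⟨TX, FX, t, f, ξ, hTX, hFX, -, hcoker⟩ := tt.pres X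
  have := (tt.orth hTX hFX (t ≫ f)).2
  have := hcoker.isIso_of_nonempty_null (h TX t hTX)
  exact tt.repleteF (asIso f).symm hFX

lemma mem_T_of_forall_nonempty_null {X : B}
    (h : ∀ (F' : B) (f : X ⟶ F'), F' ∈ tt.F → Nonempty (Θ.null f)) : X ∈ tt.T := by
  obtain ⟨TX, FX, t, f, ξ, hTX, hFX, hker, -⟩ := tt.pres X
  have := (tt.orth hTX hFX (t ≫ f)).2
  have := hker.isIso_of_nonempty_null (h FX f hFX)
  exact tt.repleteT (asIso t) hTX

end HTorsionTheory

/-- In a Θ-torsion theory, both subcategories are closed under retracts. -/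
theorem stmt18 {Θ : NullStruct.{w} B} (tt : HTorsionTheory Θ) :
    (∀ F' ∈ tt.F, ∀ (X : B) (a : X ⟶ F') (b : F' ⟶ X), a ≫ b = 𝟙 X → X ∈ tt.F) ∧
    (∀ T' ∈ tt.T, ∀ (X : B) (a : X ⟶ T') (b : T' ⟶ X), a ≫ b = 𝟙 X → X ∈ tt.T) := by
  constructor
  · intro F' hF' X a b hab
    refine tt.mem_F_of_forall_nonempty_null fun T' t hT' => ?_
    exact NullStruct.nonempty_null_of_comp_retraction hab (tt.orth hT' hF' (t ≫ a)).1
  · intro T' hT' X a b hab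
    refine tt.mem_T_of_forall_nonempty_null fun F' f hF' => ?_
    exact NullStruct.nonempty_null_of_section_comp hab (tt.orth hT' hF' (b ≫ f)).1
end
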